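/- Let v_θ be a tanh feedforward neural network of depth L ≥ 2, width W, and parameter bound |θ|_{l^∞} ≤ B_θ with B_θ ≥ 1. Then v_θ is twice differentiable and for every x ∈ ℝ^{n₀} and all coordinate indices i, j ∈ {1, …, n₀}, |∂²v_θ/∂x_i∂x_j (x)| ≤ L W^{2L−2} B_θ^{2L}. -/

import Mathlib

/-- The hidden-layer outputs of a feedforward neural network with activation `tanh`:
`tanhHidden n A b x 0 = x` is the input, and
`tanhHidden n A b x (l+1) = σ(Tˡ⁺¹(tanhHidden n A b x l))` with `σ = tanh` componentwise,
where `Tˡ⁺¹(y) = A l · y + b l` (`0`-based parameter indexing). -/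
noncomputable def tanhHidden (n : ℕ → ℕ)
    (A : ∀ l : ℕ, Fin (n (l + 1)) → Fin (n l) → ℝ)
    (b : ∀ l : ℕ, Fin (n (l + 1)) → ℝ)
    (x : Fin (n 0) → ℝ) : ∀ l : ℕ, Fin (n l) → ℝ
  | 0 => x
  | l + 1 => fun i =>
      Real.tanh (∑ j, A l i j * tanhHidden n A b x l j + b l i)

/-- The output of a depth-`L` feedforward `tanh` neural network with layer widths
`n 0, n 1, …, n L`: the affine map `T^L` (no activation) applied to the `(L-1)`-st
hidden layer. -/
noncomputable def tanhNet (L : ℕ) (n : ℕ → ℕ)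
    (A : ∀ l : ℕ, Fin (n (l + 1)) → Fin (n l) → ℝ)
    (b : ∀ l : ℕ, Fin (n (l + 1)) → ℝ)
    (x : Fin (n 0) → ℝ) : Fin (n (L - 1 + 1)) → ℝ :=
  fun i => ∑ j, A (L - 1) i j * tanhHidden n A b x (L - 1) j + b (L - 1) i

/- ### Auxiliary lemmas about `tanh` -/

lemma my_contDiff_tanh {k : ℕ∞} : ContDiff ℝ k Real.tanh := by
  have h : Real.tanh = fun x => Real.sinh x / Real.cosh x :=
    funext fun x => Real.tanh_eq_sinh_div_cosh x
  rw [h]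
  exact Real.contDiff_sinh.div Real.contDiff_cosh (fun x => (Real.cosh_pos x).ne')

lemma my_hasDerivAt_tanh (x : ℝ) : HasDerivAt Real.tanh (1 - Real.tanh x ^ 2) x := by
  have h : Real.tanh = fun x => Real.sinh x / Real.cosh x :=
    funext fun x => Real.tanh_eq_sinh_div_cosh x
  have hd := (Real.hasDerivAt_sinh x).div (Real.hasDerivAt_cosh x) (Real.cosh_pos x).ne'
  rw [h]
  refine hd.congr_deriv ?_
  simp only
  have hc := (Real.cosh_pos x).ne'
  field_simp

lemma my_abs_tanh_le_one (x : ℝ) : |Real.tanh x| ≤ 1 := by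
  rw [Real.tanh_eq_sinh_div_cosh, abs_div, abs_of_pos (Real.cosh_pos x),
    div_le_one (Real.cosh_pos x)]
  nlinarith [Real.cosh_sq_sub_sinh_sq x, Real.cosh_pos x, abs_nonneg (Real.sinh x),
    sq_abs (Real.sinh x)]

lemma my_tanh_deriv_bounds (x : ℝ) :
    0 ≤ 1 - Real.tanh x ^ 2 ∧ 1 - Real.tanh x ^ 2 ≤ 1 := by
  have h := my_abs_tanh_le_one x
  have h2 : Real.tanh x ^ 2 ≤ 1 := by
    nlinarith [sq_abs (Real.tanh x), abs_nonneg (Real.tanh x)]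
  exact ⟨by linarith, by nlinarith [sq_nonneg (Real.tanh x)]⟩

lemma my_abs_cubic {t : ℝ} (h : |t| ≤ 1) : |(-2) * t * (1 - t ^ 2)| ≤ 1 := by
  have h2 : t ^ 2 ≤ 1 := by nlinarith [sq_abs t, abs_nonneg t]
  have hsq : ((-2) * t * (1 - t ^ 2)) ^ 2 ≤ 1 := by
    nlinarith [mul_nonneg (sq_nonneg (3 * t ^ 2 - 1)) (by nlinarith : (0:ℝ) ≤ 16 - 12 * t ^ 2)]
  nlinarith [sq_abs ((-2) * t * (1 - t ^ 2)), abs_nonneg ((-2) * t * (1 - t ^ 2))]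

/- ### A convenient way to build continuous linear functionals on `Fin N → ℝ` -/

noncomputable def lin {N : ℕ} (c : Fin N → ℝ) : (Fin N → ℝ) →L[ℝ] ℝ :=
  ∑ m, c m • (ContinuousLinearMap.proj m : (Fin N → ℝ) →L[ℝ] ℝ)

lemma lin_apply {N : ℕ} (c v : Fin N → ℝ) : lin c v = ∑ m, c m * v m := by
  simp [lin]

lemma lin_single {N : ℕ} (c : Fin N → ℝ) (m : Fin N) : lin c (Pi.single m 1) = c m := by
  simp [lin_apply, Pi.single_apply]

lemma clm_ext_single {N : ℕ} {f g : (Fin N → ℝ) →L[ℝ] ℝ}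
    (h : ∀ m, f (Pi.single m 1) = g (Pi.single m 1)) : f = g := by
  ext v
  have hv : v = ∑ m, v m • (Pi.single m 1 : Fin N → ℝ) := by
    funext i
    rw [Finset.sum_apply]
    simp [Pi.single_apply]
  rw [hv, map_sum, map_sum]
  simp only [map_smul, h]

/- ### First and second partial derivatives of the hidden layers -/

noncomputable def tD1 (n : ℕ → ℕ)
    (A : ∀ l : ℕ, Fin (n (l + 1)) → Fin (n l) → ℝ)
    (b : ∀ l : ℕ, Fin (n (l + 1)) → ℝ)
    (x : Fin (n 0) → ℝ) : ∀ l : ℕ, Fin (n l) → Fin (n 0) → ℝ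
  | 0 => fun j m => if j = m then 1 else 0
  | l + 1 => fun i m =>
      (1 - Real.tanh (∑ j, A l i j * tanhHidden n A b x l j + b l i) ^ 2) *
        ∑ j, A l i j * tD1 n A b x l j m

noncomputable def tD2 (n : ℕ → ℕ)
    (A : ∀ l : ℕ, Fin (n (l + 1)) → Fin (n l) → ℝ)
    (b : ∀ l : ℕ, Fin (n (l + 1)) → ℝ)
    (x : Fin (n 0) → ℝ) : ∀ l : ℕ, Fin (n l) → Fin (n 0) → Fin (n 0) → ℝ
  | 0 => fun _ _ _ => 0
  | l + 1 => fun i m k =>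
      (-2) * Real.tanh (∑ j, A l i j * tanhHidden n A b x l j + b l i) *
          (1 - Real.tanh (∑ j, A l i j * tanhHidden n A b x l j + b l i) ^ 2) *
          (∑ j, A l i j * tD1 n A b x l j k) * (∑ j, A l i j * tD1 n A b x l j m) +
        (1 - Real.tanh (∑ j, A l i j * tanhHidden n A b x l j + b l i) ^ 2) *
          ∑ j, A l i j * tD2 n A b x l j m k

section
variable (n : ℕ → ℕ) (A : ∀ l : ℕ, Fin (n (l + 1)) → Fin (n l) → ℝ)
    (b : ∀ l : ℕ, Fin (n (l + 1)) → ℝ)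

lemma contDiff_tanhHidden :
    ∀ (l : ℕ) (j : Fin (n l)),
      ContDiff ℝ 2 (fun x : Fin (n 0) → ℝ => tanhHidden n A b x l j) := by
  intro l
  induction l with
  | zero =>
    intro j
    exact (ContinuousLinearMap.proj j : (Fin (n 0) → ℝ) →L[ℝ] ℝ).contDiff
  | succ l ih =>
    intro i
    have h : ContDiff ℝ 2 (fun x : Fin (n 0) → ℝ =>
        ∑ j, A l i j * tanhHidden n A b x l j + b l i) :=
      (ContDiff.sum fun j _ => contDiff_const.mul (ih j)).add contDiff_const
    exact my_contDiff_tanh.comp h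

lemma hasFDerivAt_tanhHidden :
    ∀ (l : ℕ) (x : Fin (n 0) → ℝ) (j : Fin (n l)),
      HasFDerivAt (fun y => tanhHidden n A b y l j) (lin (tD1 n A b x l j)) x := by
  intro l
  induction l with
  | zero =>
    intro x j
    have h0 : lin (tD1 n A b x 0 j) =
        (ContinuousLinearMap.proj j : (Fin (n 0) → ℝ) →L[ℝ] ℝ) := by
      apply clm_ext_single
      intro m
      simp [lin_single, tD1, Pi.single_apply, eq_comm]
    rw [h0]
    exact ((ContinuousLinearMap.proj j : (Fin (n 0) → ℝ) →L[ℝ] ℝ)).hasFDerivAt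
  | succ l ih =>
    intro x i
    have hu : HasFDerivAt (fun y => ∑ j, A l i j * tanhHidden n A b y l j + b l i)
        (∑ j, A l i j • lin (tD1 n A b x l j)) x := by
      exact (HasFDerivAt.fun_sum fun j _ => (ih x j).const_mul (A l i j)).add_const _
    have ht := (my_hasDerivAt_tanh
      (∑ j, A l i j * tanhHidden n A b x l j + b l i)).comp_hasFDerivAt x hu
    have heq : lin (tD1 n A b x (l + 1) i) =
        (1 - Real.tanh (∑ j, A l i j * tanhHidden n A b x l j + b l i) ^ 2) •
          ∑ j, A l i j • lin (tD1 n A b x l j) := by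
      apply clm_ext_single
      intro m
      simp [lin_single, tD1, ContinuousLinearMap.sum_apply, Finset.mul_sum]
    rw [heq]
    exact ht

lemma hasFDerivAt_tD1 :
    ∀ (l : ℕ) (x : Fin (n 0) → ℝ) (j : Fin (n l)) (m : Fin (n 0)),
      HasFDerivAt (fun y => tD1 n A b y l j m) (lin (tD2 n A b x l j m)) x := by
  intro l
  induction l with
  | zero =>
    intro x j m
    have h0 : lin (tD2 n A b x 0 j m) = 0 := by
      apply clm_ext_single
      intro k
      simp [lin_single, tD2]
    rw [h0]
    exact hasFDerivAt_const _ _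
  | succ l ih =>
    intro x i m
    set u : (Fin (n 0) → ℝ) → ℝ :=
      fun y => ∑ j, A l i j * tanhHidden n A b y l j + b l i with hu_def
    have hu : HasFDerivAt u (∑ j, A l i j • lin (tD1 n A b x l j)) x :=
      (HasFDerivAt.fun_sum fun j _ =>
        ((hasFDerivAt_tanhHidden n A b l x j).const_mul (A l i j))).add_const _
    have ht : HasFDerivAt (fun y => Real.tanh (u y))
        ((1 - Real.tanh (u x) ^ 2) • ∑ j, A l i j • lin (tD1 n A b x l j)) x :=
      (my_hasDerivAt_tanh (u x)).comp_hasFDerivAt x hu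
    have hq : HasFDerivAt (fun y => 1 - Real.tanh (u y) ^ 2)
        (-(Real.tanh (u x) •
            ((1 - Real.tanh (u x) ^ 2) • ∑ j, A l i j • lin (tD1 n A b x l j)) +
          Real.tanh (u x) •
            ((1 - Real.tanh (u x) ^ 2) • ∑ j, A l i j • lin (tD1 n A b x l j)))) x := by
      have h1 := (ht.mul ht).const_sub 1
      have h2 : (fun y => 1 - Real.tanh (u y) ^ 2) =
          fun y => 1 - Real.tanh (u y) * Real.tanh (u y) := by
        funext y; rw [sq]
      rw [h2]
      exact h1
    have hS : HasFDerivAt (fun y => ∑ j, A l i j * tD1 n A b y l j m)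
        (∑ j, A l i j • lin (tD2 n A b x l j m)) x :=
      HasFDerivAt.fun_sum fun j _ => (ih x j m).const_mul (A l i j)
    have hprod := hq.mul hS
    have heq : lin (tD2 n A b x (l + 1) i m) =
        (1 - Real.tanh (u x) ^ 2) • (∑ j, A l i j • lin (tD2 n A b x l j m)) +
          (∑ j, A l i j * tD1 n A b x l j m) •
            (-(Real.tanh (u x) •
                ((1 - Real.tanh (u x) ^ 2) • ∑ j, A l i j • lin (tD1 n A b x l j)) +
              Real.tanh (u x) •
                ((1 - Real.tanh (u x) ^ 2) • ∑ j, A l i j • lin (tD1 n A b x l j)))) := by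
      apply clm_ext_single
      intro k
      simp only [lin_single, tD2, ContinuousLinearMap.add_apply,
        ContinuousLinearMap.smul_apply, ContinuousLinearMap.sum_apply,
        ContinuousLinearMap.neg_apply, smul_eq_mul, pow_one]
      ring
    rw [heq]
    exact hprod

end

section
variable (n : ℕ → ℕ) (A : ∀ l : ℕ, Fin (n (l + 1)) → Fin (n l) → ℝ)
    (b : ∀ l : ℕ, Fin (n (l + 1)) → ℝ)
    (L W : ℕ) (Bθ : ℝ) (hW1 : 1 ≤ (W:ℝ)) (hB1 : 1 ≤ Bθ)
    (hW : ∀ l : ℕ, 1 ≤ l → l ≤ L → n l ≤ W)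
    (hA : ∀ l : ℕ, l < L → ∀ i j, |A l i j| ≤ Bθ)

include hW1 hB1 hW hA in
lemma abs_S1_le :
    ∀ l, l < L → ∀ (x : Fin (n 0) → ℝ) (i : Fin (n (l + 1))) (m : Fin (n 0)),
      |∑ j, A l i j * tD1 n A b x l j m| ≤ (W:ℝ) ^ l * Bθ ^ (l + 1) := by
  have hB0 : (0:ℝ) ≤ Bθ := le_trans zero_le_one hB1
  intro l
  induction l with
  | zero =>
    intro hl x i m
    have h0 : ∑ j, A 0 i j * tD1 n A b x 0 j m = A 0 i m := by
      simp [tD1, mul_ite]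
    rw [h0]
    simpa using hA 0 hl i m
  | succ l ih =>
    intro hl x i m
    have hl' : l < L := Nat.lt_of_succ_lt hl
    have hterm : ∀ j : Fin (n (l + 1)),
        |A (l + 1) i j * tD1 n A b x (l + 1) j m| ≤ Bθ * ((W:ℝ) ^ l * Bθ ^ (l + 1)) := by
      intro j
      rw [abs_mul]
      refine mul_le_mul (hA (l + 1) hl i j) ?_ (abs_nonneg _) hB0
      calc |tD1 n A b x (l + 1) j m|
          = |1 - Real.tanh (∑ jj, A l j jj * tanhHidden n A b x l jj + b l j) ^ 2| *
              |∑ jj, A l j jj * tD1 n A b x l jj m| := by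
            simp only [tD1, abs_mul]
        _ ≤ 1 * ((W:ℝ) ^ l * Bθ ^ (l + 1)) := by
            refine mul_le_mul ?_ (ih hl' x j m) (abs_nonneg _) zero_le_one
            rw [abs_of_nonneg (my_tanh_deriv_bounds _).1]
            exact (my_tanh_deriv_bounds _).2
        _ = (W:ℝ) ^ l * Bθ ^ (l + 1) := one_mul _
    calc |∑ j, A (l + 1) i j * tD1 n A b x (l + 1) j m|
        ≤ ∑ j, |A (l + 1) i j * tD1 n A b x (l + 1) j m| := Finset.abs_sum_le_sum_abs _ _
      _ ≤ ∑ _j : Fin (n (l + 1)), Bθ * ((W:ℝ) ^ l * Bθ ^ (l + 1)) :=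
          Finset.sum_le_sum fun j _ => hterm j
      _ = (n (l + 1) : ℝ) * (Bθ * ((W:ℝ) ^ l * Bθ ^ (l + 1))) := by
          simp [Finset.sum_const, mul_comm]
      _ ≤ (W:ℝ) * (Bθ * ((W:ℝ) ^ l * Bθ ^ (l + 1))) := by
          have : (n (l + 1) : ℝ) ≤ (W:ℝ) :=
            Nat.cast_le.mpr (hW (l + 1) (Nat.succ_le_succ (Nat.zero_le _)) (le_of_lt hl))
          apply mul_le_mul_of_nonneg_right this
          positivity
      _ = (W:ℝ) ^ (l + 1) * Bθ ^ (l + 1 + 1) := by ring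

include hW1 hB1 hW hA in
lemma abs_S2_le :
    ∀ l, l < L → ∀ (x : Fin (n 0) → ℝ) (i : Fin (n (l + 1))) (m k : Fin (n 0)),
      |∑ j, A l i j * tD2 n A b x l j m k| ≤ (l : ℝ) * (W:ℝ) ^ (2 * l) * Bθ ^ (2 * l + 1) := by
  have hB0 : (0:ℝ) ≤ Bθ := le_trans zero_le_one hB1
  have hW0 : (0:ℝ) ≤ (W:ℝ) := le_trans zero_le_one hW1
  intro l
  induction l with
  | zero =>
    intro hl x i m k
    simp [tD2]
  | succ l ih =>
    intro hl x i m k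
    have hl' : l < L := Nat.lt_of_succ_lt hl
    set β : ℝ := (W:ℝ) ^ (2 * l) * Bθ ^ (2 * l + 2) +
        (l : ℝ) * (W:ℝ) ^ (2 * l) * Bθ ^ (2 * l + 1) with hβ
    have hβ0 : 0 ≤ β := by positivity
    have hterm : ∀ j : Fin (n (l + 1)),
        |A (l + 1) i j * tD2 n A b x (l + 1) j m k| ≤ Bθ * β := by
      intro j
      rw [abs_mul]
      refine mul_le_mul (hA (l + 1) hl i j) ?_ (abs_nonneg _) hB0
      have h1 : |(-2) * Real.tanh (∑ jj, A l j jj * tanhHidden n A b x l jj + b l j) *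
          (1 - Real.tanh (∑ jj, A l j jj * tanhHidden n A b x l jj + b l j) ^ 2) *
          (∑ jj, A l j jj * tD1 n A b x l jj k) * (∑ jj, A l j jj * tD1 n A b x l jj m)|
          ≤ (W:ℝ) ^ (2 * l) * Bθ ^ (2 * l + 2) := by
        rw [abs_mul, abs_mul]
        have e1 := abs_S1_le n A b L W Bθ hW1 hB1 hW hA l hl' x j k
        have e2 := abs_S1_le n A b L W Bθ hW1 hB1 hW hA l hl' x j m
        have e3 := my_abs_cubic (my_abs_tanh_le_one
          (∑ jj, A l j jj * tanhHidden n A b x l jj + b l j))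
        calc |(-2) * Real.tanh _ * (1 - Real.tanh _ ^ 2)| *
              |∑ jj, A l j jj * tD1 n A b x l jj k| * |∑ jj, A l j jj * tD1 n A b x l jj m|
            ≤ 1 * ((W:ℝ) ^ l * Bθ ^ (l + 1)) * ((W:ℝ) ^ l * Bθ ^ (l + 1)) := by
              refine mul_le_mul (mul_le_mul e3 e1 (abs_nonneg _) zero_le_one) e2
                (abs_nonneg _) ?_
              positivity
          _ = (W:ℝ) ^ (2 * l) * Bθ ^ (2 * l + 2) := by ring
      have h2 : |(1 - Real.tanh (∑ jj, A l j jj * tanhHidden n A b x l jj + b l j) ^ 2) *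
          ∑ jj, A l j jj * tD2 n A b x l jj m k|
          ≤ (l : ℝ) * (W:ℝ) ^ (2 * l) * Bθ ^ (2 * l + 1) := by
        rw [abs_mul]
        calc |1 - Real.tanh _ ^ 2| * |∑ jj, A l j jj * tD2 n A b x l jj m k|
            ≤ 1 * ((l : ℝ) * (W:ℝ) ^ (2 * l) * Bθ ^ (2 * l + 1)) := by
              refine mul_le_mul ?_ (ih hl' x j m k) (abs_nonneg _) zero_le_one
              rw [abs_of_nonneg (my_tanh_deriv_bounds _).1]
              exact (my_tanh_deriv_bounds _).2
          _ = (l : ℝ) * (W:ℝ) ^ (2 * l) * Bθ ^ (2 * l + 1) := one_mul _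
      calc |tD2 n A b x (l + 1) j m k| ≤
          |(-2) * Real.tanh (∑ jj, A l j jj * tanhHidden n A b x l jj + b l j) *
            (1 - Real.tanh (∑ jj, A l j jj * tanhHidden n A b x l jj + b l j) ^ 2) *
            (∑ jj, A l j jj * tD1 n A b x l jj k) * (∑ jj, A l j jj * tD1 n A b x l jj m)| +
          |(1 - Real.tanh (∑ jj, A l j jj * tanhHidden n A b x l jj + b l j) ^ 2) *
            ∑ jj, A l j jj * tD2 n A b x l jj m k| := by
            simp only [tD2]
            exact abs_add_le _ _
        _ ≤ β := by rw [hβ]; exact add_le_add h1 h2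
    have hcard : (n (l + 1) : ℝ) ≤ (W:ℝ) :=
      Nat.cast_le.mpr (hW (l + 1) (Nat.succ_le_succ (Nat.zero_le _)) (le_of_lt hl))
    have hsum : |∑ j, A (l + 1) i j * tD2 n A b x (l + 1) j m k| ≤ (W:ℝ) * (Bθ * β) := by
      calc |∑ j, A (l + 1) i j * tD2 n A b x (l + 1) j m k|
          ≤ ∑ j, |A (l + 1) i j * tD2 n A b x (l + 1) j m k| := Finset.abs_sum_le_sum_abs _ _
        _ ≤ ∑ _j : Fin (n (l + 1)), Bθ * β := Finset.sum_le_sum fun j _ => hterm j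
        _ = (n (l + 1) : ℝ) * (Bθ * β) := by simp [Finset.sum_const, mul_comm]
        _ ≤ (W:ℝ) * (Bθ * β) := by
            apply mul_le_mul_of_nonneg_right hcard; positivity
    refine le_trans hsum ?_
    rw [hβ]
    have e1 : (W:ℝ) ^ (2 * l + 1) ≤ (W:ℝ) ^ (2 * l + 2) := pow_le_pow_right₀ hW1 (by omega)
    have e2 : Bθ ^ (2 * l + 2) ≤ Bθ ^ (2 * l + 3) := pow_le_pow_right₀ hB1 (by omega)
    have key : (W:ℝ) * (Bθ * ((W:ℝ) ^ (2 * l) * Bθ ^ (2 * l + 2) +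
        (l : ℝ) * (W:ℝ) ^ (2 * l) * Bθ ^ (2 * l + 1)))
        = (W:ℝ) ^ (2 * l + 1) * Bθ ^ (2 * l + 3) +
          (l : ℝ) * ((W:ℝ) ^ (2 * l + 1) * Bθ ^ (2 * l + 2)) := by ring
    rw [key]
    have goal_eq : ((l + 1 : ℕ) : ℝ) * (W:ℝ) ^ (2 * (l + 1)) * Bθ ^ (2 * (l + 1) + 1)
        = (W:ℝ) ^ (2 * l + 2) * Bθ ^ (2 * l + 3) +
          (l : ℝ) * ((W:ℝ) ^ (2 * l + 2) * Bθ ^ (2 * l + 3)) := by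
      push_cast
      ring
    rw [goal_eq]
    have hl0 : (0:ℝ) ≤ (l : ℝ) := Nat.cast_nonneg l
    gcongr

end

/-- A tanh network of depth `L ≥ 2`, width `W` and parameter bound `Bθ ≥ 1` is twice
differentiable, and each second-order partial derivative `∂² v_θ / ∂x_k ∂x_m` is
bounded in absolute value by `L W^(2L-2) Bθ^(2L)` everywhere. -/
theorem tanhNet_hessian_bound (L : ℕ) (hL : 2 ≤ L) (n : ℕ → ℕ) (hnL : n L = 1)
    (W : ℕ) (hW : ∀ l : ℕ, 1 ≤ l → l ≤ L → n l ≤ W)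
    (A : ∀ l : ℕ, Fin (n (l + 1)) → Fin (n l) → ℝ)
    (b : ∀ l : ℕ, Fin (n (l + 1)) → ℝ) (Bθ : ℝ) (hB1 : 1 ≤ Bθ)
    (hA : ∀ l : ℕ, l < L → ∀ i j, |A l i j| ≤ Bθ)
    (hb : ∀ l : ℕ, l < L → ∀ i, |b l i| ≤ Bθ) :
    ∀ i : Fin (n (L - 1 + 1)),
      ContDiff ℝ 2 (fun x => tanhNet L n A b x i) ∧
      ∀ (x : Fin (n 0) → ℝ) (k m : Fin (n 0)),
        |fderiv ℝ (fun y =>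
            fderiv ℝ (fun z => tanhNet L n A b z i) y (Pi.single m 1))
          x (Pi.single k 1)| ≤
          (L : ℝ) * (W : ℝ) ^ (2 * L - 2) * Bθ ^ (2 * L) := by
  intro i
  have hWnat : 1 ≤ W := hnL ▸ hW L (by omega) le_rfl
  have hW1 : 1 ≤ (W:ℝ) := by exact_mod_cast hWnat
  constructor
  · exact (ContDiff.sum fun j _ =>
      contDiff_const.mul (contDiff_tanhHidden n A b (L - 1) j)).add contDiff_const
  · intro x k m
    have hv : ∀ y, HasFDerivAt (fun z => tanhNet L n A b z i)
        (lin (fun m' => ∑ j, A (L - 1) i j * tD1 n A b y (L - 1) j m')) y := by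
      intro y
      have h := (HasFDerivAt.fun_sum fun j (_ : j ∈ Finset.univ) =>
        ((hasFDerivAt_tanhHidden n A b (L - 1) y j).const_mul
          (A (L - 1) i j))).add_const (b (L - 1) i)
      have heq : lin (fun m' => ∑ j, A (L - 1) i j * tD1 n A b y (L - 1) j m') =
          ∑ j, A (L - 1) i j • lin (tD1 n A b y (L - 1) j) := by
        apply clm_ext_single
        intro m'
        simp [lin_single, ContinuousLinearMap.sum_apply]
      rw [heq]
      exact h
    have hfd1 : (fun y => fderiv ℝ (fun z => tanhNet L n A b z i) y (Pi.single m 1)) =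
        fun y => ∑ j, A (L - 1) i j * tD1 n A b y (L - 1) j m := by
      funext y
      rw [(hv y).fderiv, lin_single]
    have hv2 : HasFDerivAt (fun y => ∑ j, A (L - 1) i j * tD1 n A b y (L - 1) j m)
        (lin (fun k' => ∑ j, A (L - 1) i j * tD2 n A b x (L - 1) j m k')) x := by
      have h := HasFDerivAt.fun_sum fun j (_ : j ∈ Finset.univ) =>
        ((hasFDerivAt_tD1 n A b (L - 1) x j m).const_mul (A (L - 1) i j))
      have heq : lin (fun k' => ∑ j, A (L - 1) i j * tD2 n A b x (L - 1) j m k') =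
          ∑ j, A (L - 1) i j • lin (tD2 n A b x (L - 1) j m) := by
        apply clm_ext_single
        intro k'
        simp [lin_single, ContinuousLinearMap.sum_apply]
      rw [heq]
      exact h
    rw [hfd1, hv2.fderiv, lin_single]
    have hbound := abs_S2_le n A b L W Bθ hW1 hB1 hW hA (L - 1) (by omega) x i m k
    refine le_trans hbound ?_
    have h1 : 2 * (L - 1) = 2 * L - 2 := by omega
    rw [h1]
    have h2 : ((L - 1 : ℕ) : ℝ) ≤ (L : ℝ) := Nat.cast_le.mpr (Nat.sub_le L 1)
    have hB0 : (0:ℝ) ≤ Bθ := le_trans zero_le_one hB1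
    refine mul_le_mul (mul_le_mul h2 le_rfl (by positivity) (by positivity))
      (pow_le_pow_right₀ hB1 (by omega)) (by positivity) (by positivity)
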